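/- Let M be a compact connected Riemannian manifold with diameter bounded below away from zero, heat kernel p_s, and fix x ∈ M, ρ > 0. For m ∈ ℕ, let Λ_g^m ⊂ M^{m-1} be the set of tuples (x₁,…,x_{m-1}) with d_g(x_i, x_{i+1}) < ρ for all i = 0,…,m-1 (where x₀ = x_m = x). Then (1/p₁(x,x)) ∫_{Λ_g^m} ∏_{i=0}^{m-1} p_{1/m}(x_i, x_{i+1}) ∏_{i=1}^{m-1} dv_g(x_i) → 1 as m → ∞. -/

import Mathlib

open MeasureTheory Filter Set

/-- The chain of points `x = x₀, x₁, …, x_{m-1}, x_m = x` determined by a tuple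
`z ∈ M^{m-1}` of interior points and the base point `x`. -/
def chainPt {M : Type*} (x : M) (m : ℕ) (z : Fin (m - 1) → M) (j : ℕ) : M :=
  if h : 1 ≤ j ∧ j ≤ m - 1 then z ⟨j - 1, by omega⟩ else x

/-- The product `∏_{i=0}^{m-1} p_{1/m}(x_i, x_{i+1})` with `x₀ = x_m = x`. -/
noncomputable def kernelProd {M : Type*} (p : ℝ → M → M → ℝ) (x : M) (m : ℕ)
    (z : Fin (m - 1) → M) : ℝ :=
  ∏ i ∈ Finset.range m, p (1 / (m : ℝ)) (chainPt x m z i) (chainPt x m z (i + 1))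

/-- `Λ_g^m`: the tuples all of whose consecutive points are at distance `< ρ`. -/
def goodSet {M : Type*} [MetricSpace M] (x : M) (ρ : ℝ) (m : ℕ) :
    Set (Fin (m - 1) → M) :=
  {z | ∀ i < m, dist (chainPt x m z i) (chainPt x m z (i + 1)) < ρ}

/-! Chapman–Kolmogorov makes the total chain integral equal to `p₁(x,x)`. A chain outside
`Λ_g^m` has some link of length `≥ ρ`, whose factor is at most the Gaussian bound `ε_m`; the
product of the remaining `m - 1` factors integrates to `1`, since removing one link splits the
chain into two pieces hanging off a fixed endpoint, each of total mass one by symmetry and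
stochastic completeness. So the mass outside `Λ_g^m` is at most `m ε_m → 0`. -/

theorem integral_fin_succ_cons {α E : Type*} [MeasurableSpace α] (μ : Measure α) [SigmaFinite μ]
    [NormedAddCommGroup E] [NormedSpace ℝ E] {k : ℕ} {F : (Fin (k + 1) → α) → E}
    (hF : Integrable F (Measure.pi fun _ => μ)) :
    ∫ z, F z ∂(Measure.pi fun _ => μ) =
      ∫ w, ∫ y, F (Fin.cons w y) ∂(Measure.pi fun _ => μ) ∂μ := by
  have e := (measurePreserving_piFinSuccAbove (fun _ : Fin (k + 1) => μ) 0).symm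
  rw [← e.integral_comp', integral_prod]
  · simp only [MeasurableEquiv.piFinSuccAbove_symm_apply, Fin.insertNthEquiv_zero]
    rfl
  · rwa [← e.integrable_comp_emb (MeasurableEquiv.measurableEmbedding _)] at hF

section Chain

variable {M : Type*}

/-- The path `a, z 0, …, z (k - 1), b`, continued by `b` after index `k + 1`. -/
def chain (a b : M) {k : ℕ} (z : Fin k → M) (j : ℕ) : M :=
  if h : j = 0 then a else if hj : j ≤ k then z ⟨j - 1, by omega⟩ else b

@[simp]
lemma chain_zero (a b : M) {k : ℕ} (z : Fin k → M) : chain a b z 0 = a := rfl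

lemma chain_of_lt (a b : M) {k : ℕ} (z : Fin k → M) {j : ℕ} (hj : k < j) :
    chain a b z j = b := by
  simp [chain, show j ≠ 0 by omega, show ¬j ≤ k by omega]

@[simp]
lemma chain_cons_succ (a b w : M) {k : ℕ} (y : Fin k → M) (j : ℕ) :
    chain a b (Fin.cons w y : Fin (k + 1) → M) (j + 1) = chain w b y j := by
  rcases j with _ | j
  · rfl
  · by_cases hj : j + 1 ≤ k
    · simp only [chain, dif_neg (Nat.succ_ne_zero _), dif_pos hj, dif_pos (Nat.succ_le_succ hj)]
      exact Fin.cons_succ (α := fun _ => M) w y ⟨j, hj⟩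
    · simp [chain, hj]

lemma chainPt_eq_chain (x : M) {k : ℕ} (z : Fin k → M) (j : ℕ) :
    chainPt x (k + 1) z j = chain x x z j := by
  unfold chainPt chain
  split_ifs <;> first | rfl | omega

lemma continuous_chain_apply [TopologicalSpace M] (a b : M) (k j : ℕ) :
    Continuous fun z : Fin k → M => chain a b z j := by
  unfold chain
  split_ifs
  exacts [continuous_const, continuous_apply _, continuous_const]

def chainProd (p : ℝ → M → M → ℝ) (t : ℝ) (a b : M) {k : ℕ} (z : Fin k → M)
    (S : Finset ℕ) : ℝ :=
  ∏ j ∈ S, p t (chain a b z j) (chain a b z (j + 1))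

lemma kernelProd_succ (p : ℝ → M → M → ℝ) (x : M) (k : ℕ) :
    kernelProd p x (k + 1) =
      fun z : Fin k → M => chainProd p (1 / ((k + 1 : ℕ) : ℝ)) x x z (Finset.range (k + 1)) := by
  ext z
  simp_rw [kernelProd, chainProd, chainPt_eq_chain]

variable (p : ℝ → M → M → ℝ) (t : ℝ)

lemma chainProd_cons_range (a b w : M) {k : ℕ} (y : Fin k → M) :
    chainProd p t a b (Fin.cons w y : Fin (k + 1) → M) (Finset.range (k + 2)) =
      p t a w * chainProd p t w b y (Finset.range (k + 1)) := by
  rw [chainProd, Finset.prod_range_succ', mul_comm]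
  simp [chainProd]

lemma chainProd_cons_map_succ (a b w : M) {k : ℕ} (y : Fin k → M) (S : Finset ℕ) :
    chainProd p t a b (Fin.cons w y : Fin (k + 1) → M) (S.map (addRightEmbedding 1)) =
      chainProd p t w b y S := by
  simp [chainProd]

lemma chainProd_cons_erase_zero (a b w : M) {k : ℕ} (y : Fin k → M) :
    chainProd p t a b (Fin.cons w y : Fin (k + 1) → M) ((Finset.range (k + 2)).erase 0) =
      chainProd p t w b y (Finset.range (k + 1)) := by
  have hS : (Finset.range (k + 2)).erase 0 = (Finset.range (k + 1)).map (addRightEmbedding 1) := by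
    ext (_ | j) <;> simp
  rw [hS, chainProd_cons_map_succ]

lemma chainProd_cons_erase_succ (a b w : M) {k : ℕ} (y : Fin k → M) (i : ℕ) :
    chainProd p t a b (Fin.cons w y : Fin (k + 1) → M) ((Finset.range (k + 2)).erase (i + 1)) =
      p t a w * chainProd p t w b y ((Finset.range (k + 1)).erase i) := by
  have hS : (Finset.range (k + 2)).erase (i + 1) =
      insert 0 (((Finset.range (k + 1)).erase i).map (addRightEmbedding 1)) := by
    ext (_ | j) <;> simp
  rw [hS, chainProd, Finset.prod_insert (by simp), ← chainProd, chainProd_cons_map_succ]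
  simp

lemma continuous_chainProd [TopologicalSpace M] (hpt : Continuous fun q : M × M => p t q.1 q.2)
    (a b : M) (k : ℕ) (S : Finset ℕ) :
    Continuous fun z : Fin k → M => chainProd p t a b z S :=
  continuous_finsetProd _ fun j _ =>
    hpt.comp ((continuous_chain_apply a b k j).prodMk (continuous_chain_apply a b k (j + 1)))

lemma chainProd_le_mul_sum_erase [PseudoMetricSpace M] {ρ ε : ℝ} (hp : ∀ y z, 0 ≤ p t y z)
    (hε : ∀ y z, ρ ≤ dist y z → p t y z ≤ ε) {a b : M} {k : ℕ} (z : Fin k → M)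
    {S : Finset ℕ} {i : ℕ} (hi : i ∈ S) (hfar : ρ ≤ dist (chain a b z i) (chain a b z (i + 1))) :
    chainProd p t a b z S ≤ ε * ∑ j ∈ S, chainProd p t a b z (S.erase j) := by
  have hG : ∀ j, 0 ≤ chainProd p t a b z (S.erase j) :=
    fun j => Finset.prod_nonneg fun _ _ => hp _ _
  calc chainProd p t a b z S
      = p t (chain a b z i) (chain a b z (i + 1)) * chainProd p t a b z (S.erase i) :=
        (Finset.mul_prod_erase S _ hi).symm
    _ ≤ ε * chainProd p t a b z (S.erase i) := mul_le_mul_of_nonneg_right (hε _ _ hfar) (hG i)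
    _ ≤ ε * ∑ j ∈ S, chainProd p t a b z (S.erase j) :=
        mul_le_mul_of_nonneg_left (Finset.single_le_sum (fun j _ => hG j) hi)
          ((hp _ _).trans (hε _ _ hfar))

end Chain

section ChainIntegral

variable {M : Type*} [PseudoMetricSpace M] [CompactSpace M] [MeasurableSpace M] [BorelSpace M]
  (vol : Measure M) [IsFiniteMeasure vol] (p : ℝ → M → M → ℝ) {t : ℝ}

lemma integrable_chainProd (hpt : Continuous fun q : M × M => p t q.1 q.2)
    (a b : M) (k : ℕ) (S : Finset ℕ) :
    Integrable (fun z : Fin k → M => chainProd p t a b z S) (Measure.pi fun _ => vol) :=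
  (continuous_chainProd p t hpt a b k S).integrable_of_hasCompactSupport
    (.of_compactSpace _)

theorem integral_chainProd (hpt : Continuous fun q : M × M => p t q.1 q.2)
    (hsemi : ∀ s₁ s₂ : ℝ, 0 < s₁ → 0 < s₂ → ∀ y z : M,
      p (s₁ + s₂) y z = ∫ w, p s₁ y w * p s₂ w z ∂vol)
    (ht : 0 < t) (k : ℕ) (a b : M) :
    ∫ z : Fin k → M, chainProd p t a b z (Finset.range (k + 1)) ∂(Measure.pi fun _ => vol) =
      p ((k + 1) * t) a b := by
  induction k generalizing a with
  | zero => simp [chainProd, chain_of_lt, measureReal_def]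
  | succ k ih =>
    rw [integral_fin_succ_cons vol (integrable_chainProd vol p hpt a b _ _)]
    simp_rw [chainProd_cons_range, integral_const_mul, ih]
    rw [← hsemi t _ ht (by positivity)]
    congr 1
    push_cast
    ring

theorem integral_chainProd_erase
    (hpt : Continuous fun q : M × M => p t q.1 q.2) (hsymm : ∀ y z, p t y z = p t z y)
    (hsemi : ∀ s₁ s₂ : ℝ, 0 < s₁ → 0 < s₂ → ∀ y z : M,
      p (s₁ + s₂) y z = ∫ w, p s₁ y w * p s₂ w z ∂vol)
    (hcomplete : ∀ s : ℝ, 0 < s → ∀ z : M, ∫ y, p s y z ∂vol = 1)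
    (ht : 0 < t) {k i : ℕ} (hi : i ≤ k) (a b : M) :
    ∫ z : Fin k → M, chainProd p t a b z ((Finset.range (k + 1)).erase i)
      ∂(Measure.pi fun _ => vol) = 1 := by
  induction k generalizing a i with
  | zero =>
    obtain rfl : i = 0 := by omega
    simp [chainProd, measureReal_def]
  | succ k ih =>
    rw [integral_fin_succ_cons vol (integrable_chainProd vol p hpt a b _ _)]
    cases i with
    | zero =>
      simp_rw [chainProd_cons_erase_zero, integral_chainProd vol p hpt hsemi ht]
      exact hcomplete _ (by positivity) b
    | succ i =>
      simp_rw [chainProd_cons_erase_succ, integral_const_mul, ih (i := i) (by omega), mul_one,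
        hsymm a]
      exact hcomplete t ht a

lemma setIntegral_chainProd_le_of_far
    (hpt : Continuous fun q : M × M => p t q.1 q.2) (hsymm : ∀ y z, p t y z = p t z y)
    (hsemi : ∀ s₁ s₂ : ℝ, 0 < s₁ → 0 < s₂ → ∀ y z : M,
      p (s₁ + s₂) y z = ∫ w, p s₁ y w * p s₂ w z ∂vol)
    (hcomplete : ∀ s : ℝ, 0 < s → ∀ z : M, ∫ y, p s y z ∂vol = 1)
    {ρ ε : ℝ} (ht : 0 < t) (hp : ∀ y z, 0 ≤ p t y z) (hε0 : 0 ≤ ε)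
    (hε : ∀ y z, ρ ≤ dist y z → p t y z ≤ ε) (a b : M) (k : ℕ) {U : Set (Fin k → M)}
    (hU : MeasurableSet U)
    (hfar : ∀ z ∈ U, ∃ i < k + 1, ρ ≤ dist (chain a b z i) (chain a b z (i + 1))) :
    ∫ z in U, chainProd p t a b z (Finset.range (k + 1)) ∂(Measure.pi fun _ => vol) ≤
      ((k + 1 : ℕ) : ℝ) * ε := by
  set G := fun z : Fin k → M =>
    ε * ∑ i ∈ Finset.range (k + 1), chainProd p t a b z ((Finset.range (k + 1)).erase i)
  have hG : Integrable G (Measure.pi fun _ => vol) :=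
    (integrable_finsetSum _ fun i _ => integrable_chainProd vol p hpt a b k _).const_mul ε
  calc ∫ z in U, chainProd p t a b z (Finset.range (k + 1)) ∂(Measure.pi fun _ => vol)
      ≤ ∫ z in U, G z ∂(Measure.pi fun _ => vol) := by
        refine setIntegral_mono_on (integrable_chainProd vol p hpt a b k _).integrableOn
          hG.integrableOn hU fun z hz => ?_
        obtain ⟨i, hi, hfar_i⟩ := hfar z hz
        exact chainProd_le_mul_sum_erase p t hp hε z (Finset.mem_range.2 hi) hfar_i
    _ ≤ ∫ z, G z ∂(Measure.pi fun _ => vol) :=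
        setIntegral_le_integral hG (ae_of_all _ fun z => mul_nonneg hε0
          (Finset.sum_nonneg fun i _ => Finset.prod_nonneg fun _ _ => hp _ _))
    _ = ((k + 1 : ℕ) : ℝ) * ε := by
        rw [integral_const_mul, integral_finsetSum _ fun i _ =>
          integrable_chainProd vol p hpt a b k _]
        rw [Finset.sum_congr rfl fun i hi => integral_chainProd_erase vol p hpt hsymm hsemi
          hcomplete ht (Nat.lt_succ_iff.mp (Finset.mem_range.mp hi)) a b]
        simp [mul_comm]

end ChainIntegral

section GoodSet

variable {M : Type*} [MetricSpace M]

lemma continuous_chainPt (x : M) (m j : ℕ) :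
    Continuous fun z : Fin (m - 1) → M => chainPt x m z j := by
  unfold chainPt
  split_ifs
  exacts [continuous_apply _, continuous_const]

lemma isOpen_goodSet (x : M) (ρ : ℝ) (m : ℕ) : IsOpen (goodSet x ρ m) := by
  have h : goodSet x ρ m = ⋂ i ∈ Finset.range m,
      {z | dist (chainPt x m z i) (chainPt x m z (i + 1)) < ρ} := by
    ext; simp [goodSet]
  rw [h]
  exact isOpen_biInter_finset fun i _ =>
    isOpen_lt ((continuous_chainPt x m i).dist (continuous_chainPt x m (i + 1))) continuous_const

end GoodSet

section Mass

variable {M : Type*} [MetricSpace M] [CompactSpace M] [MeasurableSpace M] [BorelSpace M]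
  (vol : Measure M) [IsFiniteMeasure vol] (p : ℝ → M → M → ℝ)

lemma integral_kernelProd
    (hcont : ∀ s : ℝ, 0 < s → Continuous fun q : M × M => p s q.1 q.2)
    (hsemi : ∀ s₁ s₂ : ℝ, 0 < s₁ → 0 < s₂ → ∀ y z : M,
      p (s₁ + s₂) y z = ∫ w, p s₁ y w * p s₂ w z ∂vol)
    (x : M) (k : ℕ) :
    ∫ z, kernelProd p x (k + 1) z ∂(Measure.pi fun _ : Fin (k + 1 - 1) => vol) = p 1 x x := by
  have ht : (0 : ℝ) < 1 / ((k + 1 : ℕ) : ℝ) := by positivity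
  calc ∫ z, kernelProd p x (k + 1) z ∂(Measure.pi fun _ : Fin (k + 1 - 1) => vol)
      = p ((k + 1) * (1 / ((k + 1 : ℕ) : ℝ))) x x := by
        rw [kernelProd_succ]
        exact integral_chainProd vol p (hcont _ ht) hsemi ht k x x
    _ = p 1 x x := by
        congr 1
        push_cast
        field_simp

lemma setIntegral_goodSet_kernelProd_le
    (hcont : ∀ s : ℝ, 0 < s → Continuous fun q : M × M => p s q.1 q.2)
    (hpos : ∀ s : ℝ, 0 < s → ∀ y z, 0 < p s y z)
    (hsemi : ∀ s₁ s₂ : ℝ, 0 < s₁ → 0 < s₂ → ∀ y z : M,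
      p (s₁ + s₂) y z = ∫ w, p s₁ y w * p s₂ w z ∂vol)
    (x : M) (ρ : ℝ) (k : ℕ) :
    ∫ z in goodSet x ρ (k + 1), kernelProd p x (k + 1) z
      ∂(Measure.pi fun _ : Fin (k + 1 - 1) => vol) ≤ p 1 x x := by
  rw [← integral_kernelProd vol p hcont hsemi x k]
  refine setIntegral_le_integral ?_ (ae_of_all _ fun z => ?_)
  · rw [kernelProd_succ]
    exact integrable_chainProd vol p (hcont _ (by positivity)) x x k _
  · rw [kernelProd_succ]
    exact Finset.prod_nonneg fun _ _ => (hpos _ (by positivity) _ _).le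

lemma sub_le_setIntegral_goodSet_kernelProd
    (hcont : ∀ s : ℝ, 0 < s → Continuous fun q : M × M => p s q.1 q.2)
    (hpos : ∀ s : ℝ, 0 < s → ∀ y z, 0 < p s y z)
    (hsymm : ∀ s : ℝ, 0 < s → ∀ y z, p s y z = p s z y)
    (hsemi : ∀ s₁ s₂ : ℝ, 0 < s₁ → 0 < s₂ → ∀ y z : M,
      p (s₁ + s₂) y z = ∫ w, p s₁ y w * p s₂ w z ∂vol)
    (hcomplete : ∀ s : ℝ, 0 < s → ∀ z : M, ∫ y, p s y z ∂vol = 1)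
    (x : M) {ρ ε : ℝ} (k : ℕ) (hε0 : 0 ≤ ε)
    (hε : ∀ y z : M, ρ ≤ dist y z → p (1 / ((k + 1 : ℕ) : ℝ)) y z ≤ ε) :
    p 1 x x - ((k + 1 : ℕ) : ℝ) * ε ≤ ∫ z in goodSet x ρ (k + 1), kernelProd p x (k + 1) z
      ∂(Measure.pi fun _ : Fin (k + 1 - 1) => vol) := by
  have ht : (0 : ℝ) < 1 / ((k + 1 : ℕ) : ℝ) := by positivity
  have hF : Integrable (kernelProd p x (k + 1)) (Measure.pi fun _ : Fin (k + 1 - 1) => vol) := by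
    rw [kernelProd_succ]
    exact integrable_chainProd vol p (hcont _ ht) x x k _
  have hbad : ∫ z in (goodSet x ρ (k + 1))ᶜ, kernelProd p x (k + 1) z
      ∂(Measure.pi fun _ : Fin (k + 1 - 1) => vol) ≤ ((k + 1 : ℕ) : ℝ) * ε := by
    rw [kernelProd_succ]
    refine setIntegral_chainProd_le_of_far vol p (hcont _ ht) (hsymm _ ht) hsemi hcomplete ht
      (fun y z => (hpos _ ht y z).le) hε0 hε x x k (isOpen_goodSet x ρ _).measurableSet.compl
      fun z hz => ?_
    simpa [goodSet, chainPt_eq_chain] using hz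
  have hsplit := integral_add_compl (isOpen_goodSet x ρ (k + 1)).measurableSet hF
  rw [integral_kernelProd vol p hcont hsemi] at hsplit
  linarith

end Mass

open Topology in
lemma tendsto_natCast_mul_rpow_mul_exp_neg (C a : ℝ) {d c : ℝ} (hd : 0 < d) (hc : 0 < c) :
    Tendsto (fun m : ℕ => (m : ℝ) * (C * ((m : ℝ) / d) ^ a * Real.exp (-(m : ℝ) * c)))
      atTop (𝓝 0) := by
  have h := (tendsto_rpow_mul_exp_neg_mul_atTop_nhds_zero (a + 1) c hc).const_mul (C * d ^ (-a))
  rw [mul_zero] at h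
  have hreal : Tendsto (fun y : ℝ => y * (C * (y / d) ^ a * Real.exp (-y * c))) atTop (𝓝 0) := by
    refine h.congr' ?_
    filter_upwards [eventually_gt_atTop 0] with y hy
    rw [Real.div_rpow hy.le hd.le, Real.rpow_add hy, Real.rpow_one, Real.rpow_neg hd.le,
      show -y * c = -c * y by ring]
    ring
  exact hreal.comp tendsto_natCast_atTop_atTop

theorem stmt_4_general {M : Type*} [MetricSpace M] [CompactSpace M]
    [MeasurableSpace M] [BorelSpace M]
    (vol : Measure M) [IsFiniteMeasure vol]
    (p : ℝ → M → M → ℝ) (n : ℕ) (x : M) (ρ : ℝ) (hρ : 0 < ρ)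
    (hcont : ∀ s : ℝ, 0 < s → Continuous fun q : M × M => p s q.1 q.2)
    (hpos : ∀ s : ℝ, 0 < s → ∀ y z, 0 < p s y z)
    (hsymm : ∀ s : ℝ, 0 < s → ∀ y z, p s y z = p s z y)
    (hsemi : ∀ s₁ s₂ : ℝ, 0 < s₁ → 0 < s₂ → ∀ y z : M,
      p (s₁ + s₂) y z = ∫ w, p s₁ y w * p s₂ w z ∂vol)
    (hcomplete : ∀ s : ℝ, 0 < s → ∀ z : M, ∫ y, p s y z ∂vol = 1)
    (hgauss : ∀ᶠ m : ℕ in atTop, ∀ y z : M, ρ ≤ dist y z →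
      p (1 / (m : ℝ)) y z ≤
        2 * ((m : ℝ) / (4 * Real.pi)) ^ ((n : ℝ) / 2) * Real.exp (-(m : ℝ) * ρ ^ 2 / 4)) :
    Tendsto (fun m : ℕ => (p 1 x x)⁻¹ *
        ∫ z in goodSet x ρ m, kernelProd p x m z
          ∂(Measure.pi fun _ : Fin (m - 1) => vol))
      atTop (nhds 1) := by
  suffices hI : Tendsto (fun m : ℕ => ∫ z in goodSet x ρ m, kernelProd p x m z
      ∂(Measure.pi fun _ : Fin (m - 1) => vol)) atTop (nhds (p 1 x x)) by
    simpa [inv_mul_cancel₀ (hpos 1 one_pos x x).ne'] using hI.const_mul (p 1 x x)⁻¹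
  simp_rw [mul_div_assoc] at hgauss
  have hmass := (tendsto_natCast_mul_rpow_mul_exp_neg 2 ((n : ℝ) / 2) (d := 4 * Real.pi)
    (by positivity) (by positivity : 0 < ρ ^ 2 / 4)).comp (tendsto_add_atTop_nat 1)
  have hlower := (tendsto_const_nhds (x := p 1 x x)).sub hmass
  rw [sub_zero] at hlower
  rw [← tendsto_add_atTop_iff_nat 1]
  refine tendsto_of_tendsto_of_tendsto_of_le_of_le' hlower tendsto_const_nhds
    (((tendsto_add_atTop_nat 1).eventually hgauss).mono fun k hk => ?_)
    (Eventually.of_forall fun k => setIntegral_goodSet_kernelProd_le vol p hcont hpos hsemi x ρ k)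
  exact sub_le_setIntegral_goodSet_kernelProd vol p hcont hpos hsymm hsemi hcomplete x k
    (by positivity) hk

/-- Finite-dimensional approximation: for the heat kernel `p` of a compact Riemannian
manifold (positive, symmetric, with the semigroup property, stochastic completeness
and a Gaussian off-diagonal upper bound), the normalised heat-kernel mass of the
good set `Λ_g^m` tends to `1` as `m → ∞`:
`(1/p₁(x,x)) ∫_{Λ_g^m} ∏ p_{1/m}(x_i,x_{i+1}) ∏ dv_g(x_i) → 1`. -/
theorem stmt_4 {M : Type*} [MetricSpace M] [CompactSpace M] [ConnectedSpace M]
    [MeasurableSpace M] [BorelSpace M]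
    (vol : Measure M) [IsFiniteMeasure vol]
    (p : ℝ → M → M → ℝ) (n : ℕ) (x : M) (ρ : ℝ) (hρ : 0 < ρ)
    (hcont : ∀ s : ℝ, 0 < s → Continuous fun q : M × M => p s q.1 q.2)
    (hpos : ∀ s : ℝ, 0 < s → ∀ y z, 0 < p s y z)
    (hsymm : ∀ s : ℝ, 0 < s → ∀ y z, p s y z = p s z y)
    (hsemi : ∀ s₁ s₂ : ℝ, 0 < s₁ → 0 < s₂ → ∀ y z : M,
      p (s₁ + s₂) y z = ∫ w, p s₁ y w * p s₂ w z ∂vol)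
    (hcomplete : ∀ s : ℝ, 0 < s → ∀ z : M, ∫ y, p s y z ∂vol = 1)
    (hgauss : ∀ᶠ m : ℕ in atTop, ∀ y z : M, ρ ≤ dist y z →
      p (1 / (m : ℝ)) y z ≤
        2 * ((m : ℝ) / (4 * Real.pi)) ^ ((n : ℝ) / 2) * Real.exp (-(m : ℝ) * ρ ^ 2 / 4)) :
    Tendsto (fun m : ℕ => (p 1 x x)⁻¹ *
        ∫ z in goodSet x ρ m, kernelProd p x m z
          ∂(Measure.pi fun _ : Fin (m - 1) => vol))
      atTop (nhds 1) :=
  stmt_4_general vol p n x ρ hρ hcont hpos hsymm hsemi hcomplete hgauss
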